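/- arXiv:2209.09077 — 2 statements merged into one kernel-verified Lean document; each statement's English description precedes it below -/
import Mathlib

section
/- Under the MES sampling setup, the regret of the multinomial empirical success rule satisfies 0 ≤ U_{M*} − u ≤ (1/2)·e^{−1/2}·Σ_{k≠M*} (A_k + A_{M*})^{1/2}. -/
/-!
The events "arm `k` has the strictly largest empirical welfare" partition `Ω` up to the null set
of ties, so the regret is `∑_{k ≠ M*} P(arm k wins) · Δ_{M*k}`. Arm `k` can only win if
`(Û_k - U_k) - (Û_{M*} - U_{M*}) ≥ Δ_{M*k}`. The left side is a weighted sum of independent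
centred `[0,1]`-valued samples whose squared weights add up to `A_k + A_{M*}`, so by Hoeffding's
lemma it is sub-Gaussian with variance proxy `σ² = (A_k + A_{M*}) / 4`, and the Chernoff bound
gives `P(arm k wins) ≤ exp (-Δ² / (2σ²))`. Maximising `Δ ↦ Δ exp (-Δ² / (2σ²))` at `Δ = σ` bounds
each term by `σ e^{-1/2}`.
-/

open MeasureTheory ProbabilityTheory Finset

namespace Real

lemma mul_exp_neg_sq_div_le (x : ℝ) {c : ℝ} (hc : 0 < c) :
    x * exp (-x ^ 2 / (2 * c)) ≤ √c * exp (-(1 / 2)) := by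
  have hs : 0 < √c := sqrt_pos.2 hc
  have hy : x / √c ≤ exp ((x / √c) ^ 2 / 2 - 1 / 2) :=
    calc x / √c ≤ (x / √c) ^ 2 / 2 - 1 / 2 + 1 := by nlinarith [sq_nonneg (x / √c - 1)]
      _ ≤ _ := add_one_le_exp _
  have hsq : (x / √c) ^ 2 = x ^ 2 / c := by rw [div_pow, sq_sqrt hc.le]
  calc x * exp (-x ^ 2 / (2 * c))
      = √c * (x / √c * exp (-((x / √c) ^ 2 / 2))) := by
        rw [hsq]; field_simp
    _ ≤ √c * (exp ((x / √c) ^ 2 / 2 - 1 / 2) * exp (-((x / √c) ^ 2 / 2))) := by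
        gcongr
    _ = √c * exp (-(1 / 2)) := by rw [← exp_add]; ring_nf

lemma one_sub_sq_div_add_sq_div_pos (x : ℝ) {a b : ℝ} (ha : 0 < a) (hb : 0 < b) :
    0 < (1 - x) ^ 2 / a + x ^ 2 / b := by
  rcases eq_or_ne x 0 with rfl | hx
  · simpa using ha
  · exact add_pos_of_nonneg_of_pos (by positivity) (by positivity)

end Real

section

variable {Ω ι : Type*} [MeasurableSpace Ω] {P : Measure Ω}

namespace MeasureTheory

lemma sum_measureReal_forall_lt_eq_one [IsProbabilityMeasure P] [Fintype ι] [Nonempty ι]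
    {V : ι → Ω → ℝ} (hV : ∀ i, Measurable (V i))
    (hties : ∀ i j, i ≠ j → P {ω | V i ω = V j ω} = 0) :
    ∑ k, P.real {ω | ∀ j, j ≠ k → V j ω < V k ω} = 1 := by
  set E : ι → Set Ω := fun k ↦ {ω | ∀ j, j ≠ k → V j ω < V k ω}
  have hE : ∀ k, MeasurableSet (E k) := fun k ↦ by
    simp only [E, Set.ofPred_forall]
    exact .iInter fun j ↦ .iInter fun _ ↦ measurableSet_lt (hV j) (hV k)
  have hdisj : Pairwise (Function.onFun Disjoint E) := fun j k hjk ↦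
    Set.disjoint_left.2 fun ω hj hk ↦ (hj k hjk.symm).not_gt (hk j hjk)
  -- outside the null set of ties, the argmax is strict
  have hcover : (⋃ k, E k)ᶜ ⊆ ⋃ i, ⋃ j, ⋃ (_ : i ≠ j), {ω | V i ω = V j ω} := by
    intro ω hω
    obtain ⟨k, -, hk⟩ := Finset.exists_max_image Finset.univ (fun j ↦ V j ω) Finset.univ_nonempty
    simp only [E, Set.mem_compl_iff, Set.mem_iUnion, not_exists, Set.mem_ofPred_eq,
      not_forall, not_lt] at hω
    obtain ⟨j, hjk, hle⟩ := hω k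
    simp only [Set.mem_iUnion, Set.mem_ofPred_eq]
    exact ⟨j, k, hjk, le_antisymm (hk j (Finset.mem_univ j)) hle⟩
  have hnull : P (⋃ k, E k)ᶜ = 0 := measure_mono_null hcover <|
    measure_iUnion_null fun i ↦ measure_iUnion_null fun j ↦ measure_iUnion_null (hties i j)
  have hcompl := measureReal_compl (μ := P) (MeasurableSet.iUnion hE)
  rw [measureReal_def, hnull, probReal_univ, ENNReal.toReal_zero] at hcompl
  rw [← measureReal_iUnion_fintype hdisj hE]
  linarith

end MeasureTheory

namespace ProbabilityTheory

lemma iIndepFun.indepFun_sum_sum {X : ι → Ω → ℝ} (hX : iIndepFun X P)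
    (hmeas : ∀ i, Measurable (X i)) {S T : Finset ι} (hST : Disjoint S T) {f g : ι → ℝ → ℝ}
    (hf : ∀ i, Measurable (f i)) (hg : ∀ i, Measurable (g i)) :
    IndepFun (fun ω ↦ ∑ i ∈ S, f i (X i ω)) (fun ω ↦ ∑ i ∈ T, g i (X i ω)) P := by
  have := (hX.indepFun_finset S T hST hmeas).comp
    (φ := fun x : S → ℝ ↦ ∑ i : S, f i (x i)) (ψ := fun x : T → ℝ ↦ ∑ i : T, g i (x i))
    (by fun_prop) (by fun_prop)
  convert this using 1 <;> ext ω
  exacts [(S.sum_coe_sort fun i ↦ f i (X i ω)).symm, (T.sum_coe_sort fun i ↦ g i (X i ω)).symm]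

lemma hasSubgaussianMGF_sum_mul_sub_integral [IsProbabilityMeasure P] {X : ι → Ω → ℝ}
    (hX : iIndepFun X P) (hmeas : ∀ i, Measurable (X i)) {a b : ℝ}
    (hab : ∀ i ω, X i ω ∈ Set.Icc a b) (s : Finset ι) (c : ι → ℝ) :
    HasSubgaussianMGF (fun ω ↦ ∑ i ∈ s, c i * (X i ω - P[X i]))
      ((∑ i ∈ s, ‖c i‖₊ ^ 2) * (‖b - a‖₊ / 2) ^ 2) P := by
  rw [Finset.sum_mul]
  refine HasSubgaussianMGF.sum_of_iIndepFun
    (hX.comp (fun i x ↦ c i * (x - P[X i])) fun i ↦ by fun_prop) fun i _ ↦ ?_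
  have h := (hasSubgaussianMGF_of_mem_Icc (hmeas i).aemeasurable (ae_of_all P (hab i))).const_mul
    (c i)
  rwa [show ‖c i‖₊ ^ 2 = ⟨c i ^ 2, sq_nonneg _⟩ by ext; exact sq_abs (c i)]

lemma HasSubgaussianMGF.sum_sub_sum_of_iIndepFun [IsProbabilityMeasure P] {X : ι → Ω → ℝ}
    (hX : iIndepFun X P) (hmeas : ∀ i, Measurable (X i)) {a b : ℝ}
    (hab : ∀ i ω, X i ω ∈ Set.Icc a b) {S T : Finset ι} (hST : Disjoint S T) (c : ι → ℝ) :
    HasSubgaussianMGF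
      (fun ω ↦ ∑ i ∈ S, c i * (X i ω - P[X i]) - ∑ i ∈ T, c i * (X i ω - P[X i]))
      ((∑ i ∈ S, ‖c i‖₊ ^ 2 + ∑ i ∈ T, ‖c i‖₊ ^ 2) * (‖b - a‖₊ / 2) ^ 2) P := by
  have hS := hasSubgaussianMGF_sum_mul_sub_integral hX hmeas hab S c
  have hT := hasSubgaussianMGF_sum_mul_sub_integral hX hmeas hab T c
  have hind := hX.indepFun_sum_sum hmeas hST (f := fun i x ↦ c i * (x - P[X i]))
      (g := fun i x ↦ c i * (x - P[X i])) (fun i ↦ by fun_prop) fun i ↦ by fun_prop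
  rw [add_mul]
  exact hS.sub_of_indepFun hT hind

end ProbabilityTheory

section MES

variable {K : ℕ}

noncomputable def armSamples (N : Fin K → Fin 2 → ℕ) (j : Fin K) : Finset (Fin K × Fin 2 × ℕ) :=
  (Finset.univ.sigma fun t ↦ range (N j t)).map
    ⟨fun p ↦ (j, p.1, p.2), fun ⟨_, _⟩ ⟨_, _⟩ h ↦ by
      simp only [Prod.mk.injEq] at h
      obtain ⟨-, rfl, rfl⟩ := h
      rfl⟩

noncomputable def sampleWeight (π : Fin K → ℝ) (N : Fin K → Fin 2 → ℕ)
    (q : Fin K × Fin 2 × ℕ) : ℝ :=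
  ![1 - π q.1, π q.1] q.2.1 / N q.1 q.2.1

lemma sum_armSamples (N : Fin K → Fin 2 → ℕ) (j : Fin K) (f : Fin K × Fin 2 × ℕ → ℝ) :
    ∑ q ∈ armSamples N j, f q
      = ∑ i ∈ range (N j 0), f (j, 0, i) + ∑ i ∈ range (N j 1), f (j, 1, i) := by
  rw [armSamples, sum_map, sum_sigma, Fin.sum_univ_two]
  rfl

lemma disjoint_armSamples (N : Fin K → Fin 2 → ℕ) {j k : Fin K} (hjk : j ≠ k) :
    Disjoint (armSamples N j) (armSamples N k) := by
  rw [Finset.disjoint_left]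
  intro q hqj hqk
  simp only [armSamples, mem_map] at hqj hqk
  obtain ⟨_, -, rfl⟩ := hqj
  obtain ⟨_, -, h⟩ := hqk
  exact hjk (congrArg Prod.fst h).symm

variable {π : Fin K → ℝ} {N : Fin K → Fin 2 → ℕ} {j : Fin K}

lemma sum_sampleWeight_mul_sub (hN : ∀ t, N j t ≠ 0) (Y : Fin K → Fin 2 → ℕ → ℝ)
    (μ : Fin K → Fin 2 → ℝ) :
    ∑ q ∈ armSamples N j, sampleWeight π N q * (Y q.1 q.2.1 q.2.2 - μ q.1 q.2.1)
      = (1 - π j) * ((N j 0 : ℝ)⁻¹ * ∑ i ∈ range (N j 0), Y j 0 i)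
          + π j * ((N j 1 : ℝ)⁻¹ * ∑ i ∈ range (N j 1), Y j 1 i)
        - ((1 - π j) * μ j 0 + π j * μ j 1) := by
  have h0 : (N j 0 : ℝ) ≠ 0 := Nat.cast_ne_zero.2 (hN 0)
  have h1 : (N j 1 : ℝ) ≠ 0 := Nat.cast_ne_zero.2 (hN 1)
  simp only [sum_armSamples, sampleWeight, ← mul_sum, sum_sub_distrib, sum_const, card_range,
    nsmul_eq_mul, Matrix.cons_val_zero, Matrix.cons_val_one, Matrix.cons_val_fin_one]
  field_simp
  ring

lemma sum_sampleWeight_sq (hN : ∀ t, N j t ≠ 0) :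
    ∑ q ∈ armSamples N j, sampleWeight π N q ^ 2
      = (1 - π j) ^ 2 / (N j 0 : ℝ) + π j ^ 2 / (N j 1 : ℝ) := by
  have h0 : (N j 0 : ℝ) ≠ 0 := Nat.cast_ne_zero.2 (hN 0)
  have h1 : (N j 1 : ℝ) ≠ 0 := Nat.cast_ne_zero.2 (hN 1)
  simp only [sum_armSamples, sampleWeight, sum_const, card_range, nsmul_eq_mul,
    Matrix.cons_val_zero, Matrix.cons_val_one, Matrix.cons_val_fin_one]
  field_simp

lemma measureReal_le_welfare_gap_le [IsProbabilityMeasure P] (hN : ∀ k t, 1 ≤ N k t)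
    {Y : Fin K → Fin 2 → ℕ → Ω → ℝ}
    (hmeas : ∀ k t i, Measurable (Y k t i)) (hrange : ∀ k t i ω, Y k t i ω ∈ Set.Icc (0 : ℝ) 1)
    {μ : Fin K → Fin 2 → ℝ} (hmean : ∀ k t i, ∫ ω, Y k t i ω ∂P = μ k t)
    (hindep : iIndepFun (fun p : Fin K × Fin 2 × ℕ => Y p.1 p.2.1 p.2.2) P)
    {Uhat : Fin K → Ω → ℝ}
    (hUhat : ∀ k ω, Uhat k ω
      = (1 - π k) * ((N k 0 : ℝ)⁻¹ * ∑ i ∈ Finset.range (N k 0), Y k 0 i ω)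
        + π k * ((N k 1 : ℝ)⁻¹ * ∑ i ∈ Finset.range (N k 1), Y k 1 i ω))
    {U : Fin K → ℝ} (hU : ∀ k, U k = (1 - π k) * μ k 0 + π k * μ k 1)
    {A : Fin K → ℝ} (hA : ∀ k, A k = (1 - π k) ^ 2 / (N k 0 : ℝ) + (π k) ^ 2 / (N k 1 : ℝ))
    {j k : Fin K} (hjk : j ≠ k) {ε : ℝ} (hε : 0 ≤ ε) :
    P.real {ω | ε ≤ (Uhat j ω - U j) - (Uhat k ω - U k)}
      ≤ Real.exp (-ε ^ 2 / (2 * ((A j + A k) / 4))) := by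
  have hN' : ∀ j t, N j t ≠ 0 := fun j t ↦ Nat.one_le_iff_ne_zero.1 (hN j t)
  have hD := (HasSubgaussianMGF.sum_sub_sum_of_iIndepFun hindep (fun _ ↦ hmeas _ _ _)
    (fun _ ↦ hrange _ _ _) (disjoint_armSamples N hjk) (sampleWeight π N)).measure_ge_le hε
  simp only [hmean] at hD
  have hsum : ∀ ω,
      (∑ q ∈ armSamples N j, sampleWeight π N q * (Y q.1 q.2.1 q.2.2 ω - μ q.1 q.2.1)
        - ∑ q ∈ armSamples N k, sampleWeight π N q * (Y q.1 q.2.1 q.2.2 ω - μ q.1 q.2.1))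
      = (Uhat j ω - U j) - (Uhat k ω - U k) := fun ω ↦ by
    rw [sum_sampleWeight_mul_sub (hN' j) (fun k t i ↦ Y k t i ω),
      sum_sampleWeight_mul_sub (hN' k) (fun k t i ↦ Y k t i ω), hUhat, hUhat, hU, hU]
  have hvar : (((∑ q ∈ armSamples N j, ‖sampleWeight π N q‖₊ ^ 2
      + ∑ q ∈ armSamples N k, ‖sampleWeight π N q‖₊ ^ 2) * (‖(1 : ℝ) - 0‖₊ / 2) ^ 2 : NNReal) : ℝ)
      = (A j + A k) / 4 := by
    push_cast
    simp only [Real.norm_eq_abs, sq_abs, sum_sampleWeight_sq (hN' _), hA]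
    norm_num
    ring
  simpa only [hsum, hvar] using hD

end MES

end

theorem mes_regret_bound_general
    {Ω : Type*} [MeasurableSpace Ω] (P : Measure Ω) [IsProbabilityMeasure P]
    (K : ℕ)
    (π : Fin K → ℝ)
    (N : Fin K → Fin 2 → ℕ) (hN : ∀ k t, 1 ≤ N k t)
    (Y : Fin K → Fin 2 → ℕ → Ω → ℝ)
    (hmeas : ∀ k t i, Measurable (Y k t i))
    (hrange : ∀ k t i ω, Y k t i ω ∈ Set.Icc (0 : ℝ) 1)
    (μ : Fin K → Fin 2 → ℝ)
    (hmean : ∀ k t i, ∫ ω, Y k t i ω ∂P = μ k t)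
    (hindep : iIndepFun
      (fun p : Fin K × Fin 2 × ℕ => Y p.1 p.2.1 p.2.2) P)
    (Uhat : Fin K → Ω → ℝ)
    (hUhat : ∀ k ω, Uhat k ω
      = (1 - π k) * ((N k 0 : ℝ)⁻¹ * ∑ i ∈ Finset.range (N k 0), Y k 0 i ω)
        + π k * ((N k 1 : ℝ)⁻¹ * ∑ i ∈ Finset.range (N k 1), Y k 1 i ω))
    (U : Fin K → ℝ)
    (hU : ∀ k, U k = (1 - π k) * μ k 0 + π k * μ k 1)
    (A : Fin K → ℝ)
    (hA : ∀ k, A k = (1 - π k) ^ 2 / (N k 0 : ℝ) + (π k) ^ 2 / (N k 1 : ℝ))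
    (u : ℝ)
    (hu : u = ∑ k, (P {ω | ∀ j, j ≠ k → Uhat j ω < Uhat k ω}).toReal * U k)
    (hties : ∀ j k, j ≠ k → P {ω | Uhat j ω = Uhat k ω} = 0)
    (M : Fin K) (hM : ∀ k, U k ≤ U M) :
    0 ≤ U M - u
      ∧ U M - u ≤ (1 / 2) * Real.exp (-(1 / 2))
          * ∑ k ∈ Finset.univ.erase M, Real.sqrt (A k + A M) := by
  set p : Fin K → ℝ := fun k ↦ P.real {ω | ∀ j, j ≠ k → Uhat j ω < Uhat k ω}
  have hp : ∑ k, p k = 1 :=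
    have : Nonempty (Fin K) := ⟨M⟩
    sum_measureReal_forall_lt_eq_one (fun k ↦ by rw [funext (hUhat k)]; fun_prop) hties
  have hregret : U M - u = ∑ k ∈ univ.erase M, p k * (U M - U k) := by
    rw [sum_erase univ (by rw [sub_self, mul_zero])]
    simp only [mul_sub, sum_sub_distrib, ← sum_mul, hp, one_mul, hu]
    rfl
  refine ⟨hregret ▸ sum_nonneg fun k _ ↦ mul_nonneg measureReal_nonneg (sub_nonneg.2 (hM k)), ?_⟩
  rw [hregret, mul_sum]
  refine sum_le_sum fun k hk ↦ ?_
  have hkM : k ≠ M := ne_of_mem_erase hk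
  have hA₄ : 0 < (A k + A M) / 4 := by
    have hpos : ∀ j, 0 < A j := fun j ↦ hA j ▸ Real.one_sub_sq_div_add_sq_div_pos _
      (by exact_mod_cast hN j 0) (by exact_mod_cast hN j 1)
    linarith [hpos k, hpos M]
  have hbeat : p k ≤ Real.exp (-(U M - U k) ^ 2 / (2 * ((A k + A M) / 4))) :=
    (measureReal_mono fun ω hω ↦ by
      have := hω M hkM.symm
      simp only [Set.mem_ofPred_eq]
      linarith).trans
      (measureReal_le_welfare_gap_le hN hmeas hrange hmean hindep hUhat hU hA hkM
        (sub_nonneg.2 (hM k)))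
  calc p k * (U M - U k)
      ≤ (U M - U k) * Real.exp (-(U M - U k) ^ 2 / (2 * ((A k + A M) / 4))) := by
        rw [mul_comm]; gcongr; exact sub_nonneg.2 (hM k)
    _ ≤ √((A k + A M) / 4) * Real.exp (-(1 / 2)) := Real.mul_exp_neg_sq_div_le _ hA₄
    _ = 1 / 2 * Real.exp (-(1 / 2)) * √(A k + A M) := by
        rw [Real.sqrt_div' _ (by norm_num), show (4 : ℝ) = 2 ^ 2 by norm_num,
          Real.sqrt_sq two_pos.le]
        ring

/-- Under the MES sampling setup, the regret of the multinomial empirical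
success rule satisfies `0 ≤ U_{M*} − u ≤ (1/2)·e^{−1/2}·Σ_{k≠M*} (A_k + A_{M*})^{1/2}`. -/
theorem mes_regret_bound
    {Ω : Type*} [MeasurableSpace Ω] (P : Measure Ω) [IsProbabilityMeasure P]
    (K : ℕ) (hK : 1 ≤ K)
    (π : Fin K → ℝ) (hπ : ∀ k, π k ∈ Set.Icc (0 : ℝ) 1)
    (N : Fin K → Fin 2 → ℕ) (hN : ∀ k t, 1 ≤ N k t)
    (Y : Fin K → Fin 2 → ℕ → Ω → ℝ)
    (hmeas : ∀ k t i, Measurable (Y k t i))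
    (hrange : ∀ k t i ω, Y k t i ω ∈ Set.Icc (0 : ℝ) 1)
    (μ : Fin K → Fin 2 → ℝ)
    (hmean : ∀ k t i, ∫ ω, Y k t i ω ∂P = μ k t)
    (hident : ∀ k t i j, P.map (Y k t i) = P.map (Y k t j))
    (hindep : iIndepFun
      (fun p : Fin K × Fin 2 × ℕ => Y p.1 p.2.1 p.2.2) P)
    (Uhat : Fin K → Ω → ℝ)
    (hUhat : ∀ k ω, Uhat k ω
      = (1 - π k) * ((N k 0 : ℝ)⁻¹ * ∑ i ∈ Finset.range (N k 0), Y k 0 i ω)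
        + π k * ((N k 1 : ℝ)⁻¹ * ∑ i ∈ Finset.range (N k 1), Y k 1 i ω))
    (U : Fin K → ℝ)
    (hU : ∀ k, U k = (1 - π k) * μ k 0 + π k * μ k 1)
    (A : Fin K → ℝ)
    (hA : ∀ k, A k = (1 - π k) ^ 2 / (N k 0 : ℝ) + (π k) ^ 2 / (N k 1 : ℝ))
    (u : ℝ)
    (hu : u = ∑ k, (P {ω | ∀ j, j ≠ k → Uhat j ω < Uhat k ω}).toReal * U k)
    (hties : ∀ j k, j ≠ k → P {ω | Uhat j ω = Uhat k ω} = 0)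
    (M : Fin K) (hM : ∀ k, U k ≤ U M) :
    0 ≤ U M - u
      ∧ U M - u ≤ (1 / 2) * Real.exp (-(1 / 2))
          * ∑ k ∈ Finset.univ.erase M, Real.sqrt (A k + A M) :=
  mes_regret_bound_general P K π N hN Y hmeas hrange μ hmean hindep Uhat hUhat U hU A hA u hu hties
    M hM
end

section
/- Let Φ be the standard normal cumulative distribution function, let φ: ℝ → [0,1] be measurable with α := ∫ φ dN(0,1) ∈ (0,1), and let c := Φ^{-1}(1−α). Then for every b ∈ ℝ, the regret risk of the threshold rule is no larger than that of φ: b·(1{b > 0} − ∫ 1{x > c} dN(b,1)) ≤ b·(1{b > 0} − ∫ φ dN(b,1)). -/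
/-!
Neyman–Pearson argument. The likelihood ratio `dN(b,1)/dN(0,1) (x) = exp (b x - b²/2)`
makes `x ↦ b · exp (b x - b²/2)` nondecreasing for every `b`, while `h = 1{· > c} - φ` is
`≥ 0` above `c`, `≤ 0` at or below `c`, and has `N(0,1)`-mean zero by the choice of `c`.
Hence `b · ∫ h dN(b,1) = ∫ h(x) (b e^{b x - b²/2} - b e^{b c - b²/2}) dN(0,1) ≥ 0`,
which is the claim.
-/

open MeasureTheory ProbabilityTheory Real
open scoped NNReal

lemma gaussianPDFReal_eq_mul_exp (b : ℝ) (v : ℝ≥0) (x : ℝ) :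
    gaussianPDFReal b v x
      = gaussianPDFReal 0 v x * exp ((v : ℝ)⁻¹ * b * x - b ^ 2 / (2 * v)) := by
  rw [gaussianPDFReal, gaussianPDFReal, mul_assoc _ (exp _), ← exp_add]
  congr 2
  ring

lemma integral_gaussianReal_eq_integral_mul_exp {v : ℝ≥0} (hv : v ≠ 0) (b : ℝ)
    (f : ℝ → ℝ) :
    ∫ x, f x ∂gaussianReal b v
      = ∫ x, f x * exp ((v : ℝ)⁻¹ * b * x - b ^ 2 / (2 * v)) ∂gaussianReal 0 v := by
  rw [integral_gaussianReal_eq_integral_smul hv, integral_gaussianReal_eq_integral_smul hv]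
  congr 1 with x
  rw [gaussianPDFReal_eq_mul_exp, smul_eq_mul, smul_eq_mul]
  ring

lemma monotone_mul_exp_mul_sub {t : ℝ} (ht : 0 ≤ t) (b a : ℝ) :
    Monotone fun x => b * exp (t * b * x - a) := by
  intro x y hxy
  rcases le_total 0 b with hb | hb
  · have htb : 0 ≤ t * b := mul_nonneg ht hb
    exact mul_le_mul_of_nonneg_left (exp_le_exp.2 (by nlinarith)) hb
  · have htb : t * b ≤ 0 := mul_nonpos_of_nonneg_of_nonpos ht hb
    exact mul_le_mul_of_nonpos_left (exp_le_exp.2 (by nlinarith)) hb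

/-- Single-crossing form of the Neyman–Pearson lemma. If `h * g` is not integrable, neither is
`h (g - g c)`, and both integrals are `0`. -/
lemma integral_mul_nonneg_of_monotone {α : Type*} [MeasurableSpace α] [LinearOrder α]
    {μ : Measure α} {h g : α → ℝ} {c : α} (hg : Monotone g)
    (h_pos : ∀ x, c < x → 0 ≤ h x) (h_nonpos : ∀ x, x ≤ c → h x ≤ 0)
    (hh : Integrable h μ) (h_zero : ∫ x, h x ∂μ = 0) :
    0 ≤ ∫ x, h x * g x ∂μ := by
  by_cases hhg : Integrable (fun x => h x * g x) μ
  swap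
  · rw [integral_undef hhg]
  have h_shift : ∫ x, h x * (g x - g c) ∂μ = ∫ x, h x * g x ∂μ := by
    simp_rw [mul_sub]
    rw [integral_sub hhg (hh.mul_const _), integral_mul_const, h_zero, zero_mul, sub_zero]
  rw [← h_shift]
  refine integral_nonneg fun x => ?_
  rcases le_or_gt x c with hx | hx
  · exact mul_nonneg_of_nonpos_of_nonpos (h_nonpos x hx) (sub_nonpos.2 (hg hx))
  · exact mul_nonneg (h_pos x hx) (sub_nonneg.2 (hg hx.le))

theorem gaussian_threshold_regret_dominance_general
    (φ : ℝ → ℝ) (hφmeas : Measurable φ) (hφrange : ∀ x, φ x ∈ Set.Icc (0 : ℝ) 1)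
    (α : ℝ) (hα : α = ∫ x, φ x ∂(gaussianReal 0 1))
    (c : ℝ) (hc : ((gaussianReal 0 1) (Set.Iic c)).toReal = 1 - α) :
    ∀ b : ℝ,
      b * ((if 0 < b then (1 : ℝ) else 0) - ((gaussianReal b 1) (Set.Ioi c)).toReal)
        ≤ b * ((if 0 < b then (1 : ℝ) else 0) - ∫ x, φ x ∂(gaussianReal b 1)) := by
  intro b
  let h : ℝ → ℝ := fun x => (Set.Ioi c).indicator 1 x - φ x
  have hφ_int (m : ℝ) : Integrable φ (gaussianReal m 1) :=
    .of_bound hφmeas.aestronglyMeasurable 1 <| .of_forall fun x => by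
      rw [Real.norm_eq_abs, abs_le]
      exact ⟨by linarith [(hφrange x).1], (hφrange x).2⟩
  have h_ind_int (m : ℝ) : Integrable ((Set.Ioi c).indicator 1) (gaussianReal m 1) :=
    (integrable_const (1 : ℝ)).indicator measurableSet_Ioi
  have h_int (m : ℝ) : Integrable h (gaussianReal m 1) := (h_ind_int m).sub (hφ_int m)
  have h_integral (m : ℝ) : ∫ x, h x ∂gaussianReal m 1
      = ((gaussianReal m 1) (Set.Ioi c)).toReal - ∫ x, φ x ∂gaussianReal m 1 := by
    simp only [h]
    rw [integral_sub (h_ind_int m) (hφ_int m),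
      integral_indicator_one measurableSet_Ioi, measureReal_def]
  have h_zero : ∫ x, h x ∂gaussianReal 0 1 = 0 := by
    rw [h_integral, ← Set.compl_Iic, prob_compl_eq_one_sub measurableSet_Iic,
      ENNReal.toReal_sub_of_le prob_le_one ENNReal.one_ne_top, ENNReal.toReal_one, hc, hα]
    ring
  have key : 0 ≤ b * ∫ x, h x ∂gaussianReal b 1 := by
    rw [integral_gaussianReal_eq_integral_mul_exp one_ne_zero, ← integral_const_mul]
    simp_rw [mul_left_comm b (h _)]
    refine integral_mul_nonneg_of_monotone (c := c) (monotone_mul_exp_mul_sub (by positivity) b _)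
      (fun x hx => ?_) (fun x hx => ?_) (h_int 0) h_zero
    · simp [h, Set.indicator_of_mem (Set.mem_Ioi.2 hx), (hφrange x).2]
    · simp [h, Set.indicator_of_notMem (Set.notMem_Ioi.2 hx), (hφrange x).1]
  rw [h_integral] at key
  linear_combination key

/-- For a randomized rule `φ : ℝ → [0,1]` of size `α = ∫ φ dN(0,1) ∈ (0,1)`
and `c = Φ⁻¹(1−α)`, the regret risk of the threshold rule `1{x > c}` is no larger than that
of `φ` at every shift `b`. -/
theorem gaussian_threshold_regret_dominance
    (φ : ℝ → ℝ) (hφmeas : Measurable φ) (hφrange : ∀ x, φ x ∈ Set.Icc (0 : ℝ) 1)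
    (α : ℝ) (hα : α = ∫ x, φ x ∂(gaussianReal 0 1)) (hα01 : α ∈ Set.Ioo (0 : ℝ) 1)
    (c : ℝ) (hc : ((gaussianReal 0 1) (Set.Iic c)).toReal = 1 - α) :
    ∀ b : ℝ,
      b * ((if 0 < b then (1 : ℝ) else 0) - ((gaussianReal b 1) (Set.Ioi c)).toReal)
        ≤ b * ((if 0 < b then (1 : ℝ) else 0) - ∫ x, φ x ∂(gaussianReal b 1)) :=
  gaussian_threshold_regret_dominance_general φ hφmeas hφrange α hα c hc
end
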